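/- arXiv:1407.7379 — 2 statements merged into one kernel-verified Lean document; each statement's English description precedes it below -/
import Mathlib

section
/- A bounded function A : Z^d -> R that is discretely harmonic, i.e., (Laplacian_1 A)_i = 0 for all i in Z^d, is constant. -/
/-!
Let `g x = A (x + eₖ) - A x` for a unit vector `eₖ`. It is harmonic and bounded, and its sums
along the ray `x, x + eₖ, x + 2 eₖ, …` telescope, so they are bounded by `2M`. If `t = sup g` were
positive, the deficit `t - g ≥ 0` would be superharmonic, hence grow by at most a factor `2d`
per lattice step; starting at a point where `g` is nearly `t`, the first `K` terms of a ray
would all be close to `t` and sum to about `K t > 2M`. So `g ≤ 0`, and applying this to `-A`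
gives `g = 0`: `A` is invariant under the unit translations, which generate `ℤ^d`.
-/

/-- Discrete Laplacian on `ℤ^d`. -/
noncomputable def discreteLap (d : ℕ) (w : (Fin d → ℤ) → ℝ) (i : Fin d → ℤ) : ℝ :=
  ∑ e : Fin d,
    ((w (Function.update i e (i e + 1)) - w i) +
     (w (Function.update i e (i e - 1)) - w i))

open Finset

variable {d : ℕ}

lemma discreteLap_eq (w : (Fin d → ℤ) → ℝ) (i : Fin d → ℤ) :
    discreteLap d w i = ∑ e, (w (i + Pi.single e 1) + w (i - Pi.single e 1) - 2 * w i) := by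
  have hupdate : ∀ e (c : ℤ), Function.update i e (i e + c) = i + Pi.single e c := by
    intro e c
    ext j
    rcases eq_or_ne j e with rfl | hj <;> simp [*]
  refine sum_congr rfl fun e _ => ?_
  rw [hupdate, sub_eq_add_neg (i e), hupdate, Pi.single_neg, ← sub_eq_add_neg]
  ring

lemma discreteLap_sub (u w : (Fin d → ℤ) → ℝ) (i : Fin d → ℤ) :
    discreteLap d (fun x => u x - w x) i = discreteLap d u i - discreteLap d w i := by
  simp only [discreteLap_eq, ← sum_sub_distrib]
  exact sum_congr rfl fun _ _ => by ring

lemma discreteLap_neg (w : (Fin d → ℤ) → ℝ) (i : Fin d → ℤ) :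
    discreteLap d (fun x => -w x) i = -discreteLap d w i := by
  simp only [discreteLap_eq, ← sum_neg_distrib]
  exact sum_congr rfl fun _ _ => by ring

lemma discreteLap_comp_add_right (w : (Fin d → ℤ) → ℝ) (v i : Fin d → ℤ) :
    discreteLap d (fun x => w (x + v)) i = discreteLap d w (i + v) := by
  simp only [discreteLap_eq, add_right_comm _ v, sub_add_eq_add_sub]

lemma sub_apply_add_single_le {g : (Fin d → ℤ) → ℝ} {s : ℝ} (hs : ∀ y, g y ≤ s)
    {x : Fin d → ℤ} (hx : 0 ≤ discreteLap d g x) (e : Fin d) :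
    s - g (x + Pi.single e 1) ≤ 2 * d * (s - g x) := by
  set deficit : Fin d → ℝ := fun e' =>
    (s - g (x + Pi.single e' 1)) + (s - g (x - Pi.single e' 1))
  have hdeficit : ∑ e', deficit e' = 2 * d * (s - g x) - discreteLap d g x := by
    rw [discreteLap_eq, eq_sub_iff_add_eq, ← sum_add_distrib]
    calc ∑ e', (deficit e' + (g (x + Pi.single e' 1) + g (x - Pi.single e' 1) - 2 * g x))
        = ∑ _e' : Fin d, 2 * (s - g x) := sum_congr rfl fun _ _ => by ring
      _ = 2 * d * (s - g x) := by simp; ring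
  calc s - g (x + Pi.single e 1) ≤ deficit e := by linarith [hs (x - Pi.single e 1)]
    _ ≤ ∑ e', deficit e' :=
        single_le_sum (fun e' _ => by linarith [hs (x + Pi.single e' 1), hs (x - Pi.single e' 1)])
          (mem_univ e)
    _ ≤ 2 * d * (s - g x) := by linarith

lemma sub_apply_add_nsmul_single_le {g : (Fin d → ℤ) → ℝ} {s : ℝ} (hs : ∀ y, g y ≤ s)
    (hg : ∀ x, 0 ≤ discreteLap d g x) (x : Fin d → ℤ) (e : Fin d) (k : ℕ) :
    s - g (x + k • Pi.single e 1) ≤ (2 * d) ^ k * (s - g x) := by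
  induction k with
  | zero => simp
  | succ k ih =>
    rw [succ_nsmul, ← add_assoc, pow_succ']
    calc s - g (x + k • Pi.single e 1 + Pi.single e 1)
        ≤ 2 * d * (s - g (x + k • Pi.single e 1)) := sub_apply_add_single_le hs (hg _) e
      _ ≤ 2 * d * ((2 * d) ^ k * (s - g x)) := by gcongr
      _ = 2 * d * (2 * d) ^ k * (s - g x) := by ring

lemma nonpos_of_subharmonic_of_sum_ray_le {g : (Fin d → ℤ) → ℝ} (hbdd : BddAbove (Set.range g))
    (hg : ∀ x, 0 ≤ discreteLap d g x) (e : Fin d) {C : ℝ}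
    (hC : ∀ x K, ∑ k ∈ range K, g (x + k • Pi.single e 1) ≤ C) (x : Fin d → ℤ) : g x ≤ 0 := by
  by_contra! hpos
  set t := ⨆ y, g y
  have ht : ∀ y, g y ≤ t := le_ciSup hbdd
  have htpos : 0 < t := hpos.trans_le (ht x)
  obtain ⟨K, hK⟩ : ∃ K : ℕ, C + 1 < K * t := by
    obtain ⟨K, hK⟩ := exists_nat_gt ((C + 1) / t)
    exact ⟨K, (div_lt_iff₀ htpos).mp hK⟩
  set B := ∑ k ∈ range K, (2 * d : ℝ) ^ k
  have hB : 0 ≤ B := sum_nonneg fun _ _ => by positivity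
  -- `y` is so close to maximal that `g` stays near `t` along the first `K` steps of the ray.
  obtain ⟨y, hy⟩ : ∃ y, t - 1 / (B + 1) < g y :=
    exists_lt_of_lt_ciSup (sub_lt_self t (by positivity))
  have hsmall : B * (t - g y) < 1 := by
    have := (lt_div_iff₀' (by positivity)).mp (sub_lt_comm.mp hy)
    nlinarith [ht y]
  have hray : K * t - B * (t - g y) ≤ ∑ k ∈ range K, g (y + k • Pi.single e 1) := by
    calc K * t - B * (t - g y) = ∑ k ∈ range K, (t - (2 * d) ^ k * (t - g y)) := by
          simp [B, sum_sub_distrib, sum_mul]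
      _ ≤ ∑ k ∈ range K, g (y + k • Pi.single e 1) :=
          sum_le_sum fun k _ => by linarith [sub_apply_add_nsmul_single_le ht hg y e k]
  linarith [hC y K]

lemma apply_add_single_le_of_bounded_harmonic {A : (Fin d → ℤ) → ℝ} {M : ℝ}
    (hbdd : ∀ i, |A i| ≤ M) (hharm : ∀ i, discreteLap d A i = 0) (x : Fin d → ℤ) (e : Fin d) :
    A (x + Pi.single e 1) ≤ A x := by
  have hdiff_bdd : ∀ y, A (y + Pi.single e 1) - A y ≤ 2 * M := fun y => by
    linarith [(abs_le.mp (hbdd (y + Pi.single e 1))).2, (abs_le.mp (hbdd y)).1]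
  have hdiff_harm : ∀ y, 0 ≤ discreteLap d (fun z => A (z + Pi.single e 1) - A z) y := fun y => by
    rw [discreteLap_sub, discreteLap_comp_add_right, hharm, hharm, sub_zero]
  have htelescope : ∀ y K,
      ∑ k ∈ range K, (A (y + k • Pi.single e 1 + Pi.single e 1) - A (y + k • Pi.single e 1))
        ≤ 2 * M := fun y K => by
    simp only [add_assoc, ← succ_nsmul]
    have := sum_range_sub (fun k => A (y + k • Pi.single e 1)) K
    simp only [zero_smul, add_zero] at this
    linarith [(abs_le.mp (hbdd (y + K • Pi.single e 1))).2, (abs_le.mp (hbdd y)).1]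
  have := nonpos_of_subharmonic_of_sum_ray_le ⟨2 * M, Set.forall_mem_range.mpr hdiff_bdd⟩
    hdiff_harm e htelescope x
  linarith

lemma periodic_single_of_bounded_harmonic {A : (Fin d → ℤ) → ℝ} {M : ℝ}
    (hbdd : ∀ i, |A i| ≤ M) (hharm : ∀ i, discreteLap d A i = 0) (e : Fin d) :
    Function.Periodic A (Pi.single e 1) := fun x =>
  le_antisymm (apply_add_single_le_of_bounded_harmonic hbdd hharm x e) <| neg_le_neg_iff.mp <|
    apply_add_single_le_of_bounded_harmonic (A := fun y => -A y)
      (fun i => (abs_neg (A i)).trans_le (hbdd i))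
      (fun i => by rw [discreteLap_neg, hharm, neg_zero]) x e

lemma periodic_of_forall_periodic_single {ι α : Type*} [Fintype ι] [DecidableEq ι]
    {f : (ι → ℤ) → α} (h : ∀ e, Function.Periodic f (Pi.single e 1)) (v : ι → ℤ) :
    Function.Periodic f v := by
  rw [pi_eq_sum_univ' v]
  exact sum_induction _ (Function.Periodic f) (fun _ _ => Function.Periodic.add_period)
    (fun _ => by rw [add_zero]) fun e _ => (h e).zsmul (v e)

theorem bounded_discrete_harmonic_is_constant_general
    (d : ℕ) (A : (Fin d → ℤ) → ℝ) (M : ℝ)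
    (hbdd : ∀ i, |A i| ≤ M)
    (hharm : ∀ i, discreteLap d A i = 0) :
    ∀ i j, A i = A j := by
  intro i j
  have hperiodic := periodic_of_forall_periodic_single
    (periodic_single_of_bounded_harmonic hbdd hharm) (j - i)
  simpa using (hperiodic i).symm

/-- Discrete Liouville theorem: a bounded discretely harmonic function on `ℤ^d` is
constant. -/
theorem bounded_discrete_harmonic_is_constant
    (d : ℕ) (hd : 0 < d) (A : (Fin d → ℤ) → ℝ) (M : ℝ)
    (hbdd : ∀ i, |A i| ≤ M)
    (hharm : ∀ i, discreteLap d A i = 0) :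
    ∀ i j, A i = A j :=
  bounded_discrete_harmonic_is_constant_general d A M hbdd hharm
end

section
/- Let lambda > 0 and beta >= 1, and define V(F) = sup over mu > lambda of (1/mu) * ( lambda * (floor(F) - 2d) - log(beta) - max( log(2/(mu - lambda)), log(2e) ) ) for F >= 0. Then V is non-decreasing in F, and V(F) >= 0 for all F >= 0 sufficiently large; moreover there exists a constant C depending only on lambda, beta, d such that V(F) >= F - (1/lambda) * log(F) - C for all F > 1. -/
/-!
Every admissible `μ` gives a lower bound on the supremum. Monotonicity holds because `⌊F⌋`
enters each candidate value through the positive factor `λ / μ`. Choosing `μ = λ + 1/F` makes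
the penalty `log (2 / (μ - λ)) = log (2F)` only logarithmic in `F`, and dividing by `λ + 1/F`
rather than `λ` costs only `O(1)`. Since `log F = o(F)`, the resulting bound
`F - (log F)/λ - C` tends to infinity, so the supremum is eventually nonnegative.
-/

open Real Filter Asymptotics

namespace VelocityBound

noncomputable def penalty (lam μ : ℝ) : ℝ := max (log (2 / (μ - lam))) (log (2 * exp 1))

noncomputable def objective (lam a μ : ℝ) : ℝ := (1 / μ) * (a - penalty lam μ)

def candidates (lam a : ℝ) : Set ℝ := {v | ∃ μ, lam < μ ∧ v = objective lam a μ}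

noncomputable def velocityBound (d : ℕ) (lam β F : ℝ) : ℝ :=
  sSup (candidates lam (lam * ((⌊F⌋ : ℝ) - 2 * d) - log β))

lemma log_two_mul_exp_one_nonneg : 0 ≤ log (2 * exp 1) :=
  log_nonneg (by linarith [add_one_le_exp (1 : ℝ)])

lemma penalty_nonneg (lam μ : ℝ) : 0 ≤ penalty lam μ :=
  log_two_mul_exp_one_nonneg.trans (le_max_right _ _)

lemma penalty_add_inv_le {lam F : ℝ} (hF : 1 ≤ F) :
    penalty lam (lam + F⁻¹) ≤ log F + log (2 * exp 1) := by
  have hF0 : 0 < F := by linarith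
  have h2F : 2 / (lam + F⁻¹ - lam) = 2 * F := by field_simp; ring
  refine max_le ?_ (by linarith [log_nonneg hF])
  rw [h2F, log_mul two_ne_zero hF0.ne', log_mul two_ne_zero (exp_pos 1).ne', log_exp]
  linarith [log_nonneg hF]

lemma objective_le {lam a μ : ℝ} (hlam : 0 < lam) (hμ : lam < μ) :
    objective lam a μ ≤ max 0 (a / lam) := by
  have hμ0 : 0 < μ := hlam.trans hμ
  have hp := penalty_nonneg lam μ
  rcases le_or_gt (a - penalty lam μ) 0 with h | h
  · exact (mul_nonpos_of_nonneg_of_nonpos (by positivity) h).trans (le_max_left _ _)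
  · calc objective lam a μ ≤ (1 / lam) * (a - penalty lam μ) := by
          unfold objective; gcongr
      _ ≤ (1 / lam) * a := by gcongr; linarith
      _ = a / lam := one_div_mul_eq_div _ _
      _ ≤ max 0 (a / lam) := le_max_right _ _

lemma candidates_nonempty (lam a : ℝ) : (candidates lam a).Nonempty :=
  ⟨_, lam + 1, by linarith, rfl⟩

lemma bddAbove_candidates {lam : ℝ} (hlam : 0 < lam) (a : ℝ) : BddAbove (candidates lam a) := by
  refine ⟨max 0 (a / lam), ?_⟩
  rintro v ⟨μ, hμ, rfl⟩
  exact objective_le hlam hμ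

lemma objective_le_sSup_candidates {lam a μ : ℝ} (hlam : 0 < lam) (hμ : lam < μ) :
    objective lam a μ ≤ sSup (candidates lam a) :=
  le_csSup (bddAbove_candidates hlam a) ⟨μ, hμ, rfl⟩

lemma monotone_sSup_candidates {lam : ℝ} (hlam : 0 < lam) :
    Monotone fun a => sSup (candidates lam a) := by
  intro a b hab
  refine csSup_le (candidates_nonempty lam a) ?_
  rintro v ⟨μ, hμ, rfl⟩
  have hμ0 : 0 < μ := hlam.trans hμ
  calc objective lam a μ ≤ objective lam b μ := by unfold objective; gcongr
    _ ≤ _ := objective_le_sSup_candidates hlam hμ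

lemma monotone_velocityBound (d : ℕ) {lam : ℝ} (hlam : 0 < lam) (β : ℝ) :
    Monotone (velocityBound d lam β) := by
  intro F G hFG
  have hfloor : (⌊F⌋ : ℝ) ≤ ⌊G⌋ := by exact_mod_cast Int.floor_mono hFG
  exact monotone_sSup_candidates hlam (by gcongr)

lemma sub_div_le_div_add_inv {lam F t : ℝ} (hlam : 0 < lam) (hF : 0 < F) (ht : -1 ≤ t) :
    F - (t + 1) / lam ≤ (lam * F - t) / (lam + F⁻¹) := by
  rw [le_div_iff₀ (by positivity)]
  have hexpand : (F - (t + 1) / lam) * (lam + F⁻¹) = lam * F - t - (t + 1) / (lam * F) := by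
    field_simp; ring
  have : 0 ≤ (t + 1) / (lam * F) := div_nonneg (by linarith) (by positivity)
  linarith

lemma sub_log_sub_le_velocityBound (d : ℕ) {lam β : ℝ} (hlam : 0 < lam) (hβ : 1 ≤ β) :
    ∃ C, ∀ F, 1 < F → F - (1 / lam) * log F - C ≤ velocityBound d lam β F := by
  set K := lam * (1 + 2 * d) + log β + log (2 * exp 1)
  have hK : 0 ≤ K := by
    have := log_nonneg hβ
    have := log_two_mul_exp_one_nonneg
    positivity
  refine ⟨(K + 1) / lam, fun F hF => ?_⟩
  have hF0 : 0 < F := by linarith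
  have hlog := log_nonneg hF.le
  have hfloor : F - 1 ≤ ⌊F⌋ := (Int.sub_one_lt_floor F).le
  have hnum : lam * F - (log F + K) ≤
      lam * ((⌊F⌋ : ℝ) - 2 * d) - log β - penalty lam (lam + F⁻¹) := by
    have := penalty_add_inv_le (lam := lam) hF.le
    have : lam * (F - 1 - 2 * d) ≤ lam * ((⌊F⌋ : ℝ) - 2 * d) := by gcongr
    linarith
  calc F - (1 / lam) * log F - (K + 1) / lam = F - (log F + K + 1) / lam := by ring
    _ ≤ (lam * F - (log F + K)) / (lam + F⁻¹) := sub_div_le_div_add_inv hlam hF0 (by linarith)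
    _ ≤ objective lam (lam * ((⌊F⌋ : ℝ) - 2 * d) - log β) (lam + F⁻¹) := by
        rw [objective, one_div_mul_eq_div]; gcongr
    _ ≤ velocityBound d lam β F :=
        objective_le_sSup_candidates hlam (lt_add_of_pos_right _ (inv_pos.2 hF0))

lemma tendsto_sub_mul_log_sub_atTop (c C : ℝ) :
    Tendsto (fun F => F - c * log F - C) atTop atTop := by
  have hequiv : (fun F => F - c * log F - C) ~[atTop] id := by
    refine IsLittleO.congr_left (f₁ := fun F => -(c * log F) - C) ?_
      (fun F => by simp only [Pi.sub_apply, id]; ring)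
    exact ((isLittleO_log_id_atTop.const_mul_left c).neg_left).sub (isLittleO_const_id_atTop C)
  exact hequiv.symm.tendsto_atTop tendsto_id

end VelocityBound

open VelocityBound in
theorem velocity_bound_properties_general (d : ℕ) (lam β : ℝ)
    (hlam : 0 < lam) (hβ : 1 ≤ β) (V : ℝ → ℝ)
    (hV : ∀ F : ℝ, V F = sSup {v : ℝ | ∃ μ : ℝ, lam < μ ∧
      v = (1 / μ) * (lam * ((⌊F⌋ : ℝ) - 2 * d) - Real.log β -
        max (Real.log (2 / (μ - lam))) (Real.log (2 * Real.exp 1)))}) :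
    MonotoneOn V (Set.Ici (0 : ℝ)) ∧
    (∃ F₀ : ℝ, ∀ F : ℝ, F₀ ≤ F → 0 ≤ V F) ∧
    (∃ C : ℝ, ∀ F : ℝ, 1 < F → F - (1 / lam) * Real.log F - C ≤ V F) := by
  obtain rfl : V = velocityBound d lam β := funext hV
  obtain ⟨C, hC⟩ := sub_log_sub_le_velocityBound d hlam hβ
  refine ⟨(monotone_velocityBound d hlam β).monotoneOn _, ?_, C, hC⟩
  have hev : ∀ᶠ F in atTop, 1 < F ∧ 0 ≤ F - (1 / lam) * log F - C :=
    (eventually_gt_atTop 1).and ((tendsto_sub_mul_log_sub_atTop _ C).eventually_ge_atTop 0)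
  obtain ⟨F₀, hF₀⟩ := eventually_atTop.1 hev
  exact ⟨F₀, fun F hF => (hF₀ F hF).2.trans (hC F (hF₀ F hF).1)⟩

/-- Properties of the velocity lower bound
`V(F) = sup_{μ>λ} (1/μ)(λ(⌊F⌋ - 2d) - log β - max(log(2/(μ-λ)), log 2e))`:
it is non-decreasing on `[0,∞)`, eventually non-negative, and satisfies
`V(F) ≥ F - (1/λ) log F - C` for `F > 1`. -/
theorem velocity_bound_properties (d : ℕ) (hd : 1 ≤ d) (lam β : ℝ)
    (hlam : 0 < lam) (hβ : 1 ≤ β) (V : ℝ → ℝ)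
    (hV : ∀ F : ℝ, V F = sSup {v : ℝ | ∃ μ : ℝ, lam < μ ∧
      v = (1 / μ) * (lam * ((⌊F⌋ : ℝ) - 2 * d) - Real.log β -
        max (Real.log (2 / (μ - lam))) (Real.log (2 * Real.exp 1)))}) :
    MonotoneOn V (Set.Ici (0 : ℝ)) ∧
    (∃ F₀ : ℝ, ∀ F : ℝ, F₀ ≤ F → 0 ≤ V F) ∧
    (∃ C : ℝ, ∀ F : ℝ, 1 < F → F - (1 / lam) * Real.log F - C ≤ V F) :=
  velocity_bound_properties_general d lam β hlam hβ V hV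
end
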